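/- arXiv:2109.00261 — 4 statements merged into one kernel-verified Lean document; each statement's English description precedes it below -/
import Mathlib

section
/- Let σ = [τ̂_0,...,τ̂_m] be a simplex of the barycentric subdivision K' of a simplicial complex K, associated to a chain of faces τ_0 ◁ ... ◁ τ_m of K. Then for any simplex α ∈ K, either σ ∩ α = ∅ or σ ∩ α = [τ̂_0,...,τ̂_ℓ] for some ℓ ∈ {0,...,m}. -/
noncomputable section
open Finset Set
open scoped Classical

variable {E : Type*} [NormedAddCommGroup E] [NormedSpace ℝ E]

/-- Barycenter of a geometric simplex given by its vertex set. -/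
def bary (s : Finset E) : E := s.centroid ℝ id

lemma bary_eq {s : Finset E} (hs : s.Nonempty) :
    bary s = ∑ v ∈ s, ((s.card : ℝ)⁻¹) • v := by
  rw [bary, Finset.centroid_def, Finset.affineCombination_eq_linear_combination _ _ _
    (s.sum_centroidWeights_eq_one_of_nonempty ℝ hs)]
  simp [Finset.centroidWeights]

lemma key_support {τ : Finset E} (hτ : AffineIndependent ℝ ((↑) : τ → E))
    {n : ℕ} {f : ℕ → Finset E} (hfτ : ∀ i < n, f i ⊆ τ) (hfne : ∀ i < n, (f i).Nonempty)
    {t : ℕ → ℝ} (ht0 : ∀ i ∈ Finset.range n, 0 ≤ t i) (ht1 : ∑ i ∈ Finset.range n, t i = 1)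
    {s : Finset E} (hs : s ⊆ τ)
    (hx : ∑ i ∈ Finset.range n, t i • bary (f i) ∈ convexHull ℝ (s : Set E)) :
    ∀ i < n, 0 < t i → f i ⊆ s := by
  set w : E → ℝ := fun v => ∑ i ∈ Finset.range n, if v ∈ f i then t i / (f i).card else 0 with hw
  have hinner : ∀ i ∈ Finset.range n,
      (∑ v ∈ τ, if v ∈ f i then t i / (f i).card else 0) = t i := by
    intro i hi
    rw [Finset.sum_ite_mem, Finset.inter_eq_right.2 (hfτ i (Finset.mem_range.1 hi)),
      Finset.sum_const, nsmul_eq_mul, mul_comm, div_mul_cancel₀]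
    exact_mod_cast (hfne i (Finset.mem_range.1 hi)).card_pos.ne'
  have w_sum : ∑ v ∈ τ, w v = 1 := by
    rw [hw]; rw [Finset.sum_comm]
    rw [Finset.sum_congr rfl hinner, ht1]
  have w_smul : ∑ v ∈ τ, w v • v = ∑ i ∈ Finset.range n, t i • bary (f i) := by
    calc ∑ v ∈ τ, w v • v
        = ∑ v ∈ τ, ∑ i ∈ Finset.range n, (if v ∈ f i then (t i / (f i).card) • v else 0) := by
          refine Finset.sum_congr rfl fun v _ => ?_
          rw [hw, Finset.sum_smul]
          exact Finset.sum_congr rfl fun i _ => by rw [ite_smul, zero_smul]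
      _ = ∑ i ∈ Finset.range n, ∑ v ∈ τ, (if v ∈ f i then (t i / (f i).card) • v else 0) :=
          Finset.sum_comm
      _ = ∑ i ∈ Finset.range n, t i • bary (f i) := by
          refine Finset.sum_congr rfl fun i hi => ?_
          rw [Finset.sum_ite_mem, Finset.inter_eq_right.2 (hfτ i (Finset.mem_range.1 hi)),
            bary_eq (hfne i (Finset.mem_range.1 hi)), Finset.smul_sum]
          exact Finset.sum_congr rfl fun v _ => by rw [smul_smul, div_eq_mul_inv]
  obtain ⟨w₂, hw₂0, hw₂1, hw₂s⟩ := Finset.mem_convexHull'.1 hx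
  set u : E → ℝ := fun v => w v - if v ∈ s then w₂ v else 0 with hu
  have hu0 : ∑ v ∈ τ, u v = 0 := by
    rw [hu]
    simp only [Finset.sum_sub_distrib]
    rw [w_sum, Finset.sum_ite_mem, Finset.inter_eq_right.2 hs, hw₂1, sub_self]
  have hu1 : ∑ v ∈ τ, u v • v = 0 := by
    rw [hu]
    simp only [sub_smul, ite_smul, zero_smul, Finset.sum_sub_distrib]
    rw [w_smul, Finset.sum_ite_mem, Finset.inter_eq_right.2 hs, hw₂s, sub_self]
  have hz := hτ.eq_zero_of_sum_eq_zero_subtype hu0 hu1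
  intro i hi hti v hv
  by_contra hvs
  have hvτ : v ∈ τ := hfτ i hi hv
  have huv := hz v hvτ
  rw [hu] at huv
  simp only [hvs, if_false, sub_zero] at huv
  have hwpos : 0 < w v := by
    rw [hw]
    refine Finset.sum_pos' (fun j _ => ?_) ⟨i, Finset.mem_range.2 hi, ?_⟩
    · split
      · exact div_nonneg (ht0 j ‹_›) (Nat.cast_nonneg _)
      · exact le_refl 0
    · rw [if_pos hv]
      exact div_pos hti (by exact_mod_cast (hfne i hi).card_pos)
  exact hwpos.ne' huv

lemma bary_subset {τ : Finset E} (hτ : AffineIndependent ℝ ((↑) : τ → E))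
    {a b : Finset E} (ha : a ⊆ τ) (hb : b ⊆ τ) (hna : a.Nonempty) (hnb : b.Nonempty)
    (hab : bary a = bary b) : a ⊆ b := by
  have hx : ∑ i ∈ Finset.range 1, (1 : ℝ) • bary a ∈ convexHull ℝ (b : Set E) := by
    simp only [Finset.range_one, Finset.sum_singleton, one_smul, hab]
    exact Finset.centroid_mem_convexHull b hnb
  exact key_support hτ (f := fun _ => a) (n := 1) (fun _ _ => ha) (fun _ _ => hna)
    (t := fun _ => 1) (fun _ _ => zero_le_one) (by simp) hb hx 0 Nat.one_pos one_pos


/-- Let `σ = [τ̂_0,...,τ̂_m]` be a simplex of the barycentric subdivision of a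
simplicial complex `K`, associated to a chain of faces `τ_0 ◁ ... ◁ τ_m` of `K`.  Then for any
simplex `α ∈ K`, either `σ ∩ α = ∅` or `σ ∩ α = [τ̂_0,...,τ̂_ℓ]` for some `ℓ ∈ {0,...,m}`. -/
theorem barySub_inter_simplex (K : Geometry.SimplicialComplex ℝ E)
    (c : List (Finset E)) (hne : c ≠ []) (hchain : c.Chain' (· ⊂ ·))
    (hmem : ∀ τ ∈ c, τ ∈ K.faces) (α : Finset E) (hα : α ∈ K.faces) :
    convexHull ℝ (((c.map bary).toFinset : Finset E) : Set E) ∩ convexHull ℝ (α : Set E) = ∅ ∨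
    ∃ ℓ < c.length,
      convexHull ℝ (((c.map bary).toFinset : Finset E) : Set E) ∩ convexHull ℝ (α : Set E) =
        convexHull ℝ ((((c.take (ℓ + 1)).map bary).toFinset : Finset E) : Set E) := by
  set n := c.length with hn'
  have hn : 0 < n := List.length_pos_iff.2 hne
  set f : ℕ → Finset E := fun i => c.getD i ∅ with hf
  have hfget : ∀ (i : ℕ) (h : i < n), f i = c.get ⟨i, h⟩ := fun i h =>
    (List.getD_eq_getElem c ∅ h).trans (List.get_eq_getElem (l := c) (i := ⟨i, h⟩)).symm
  have hfK : ∀ i < n, f i ∈ K.faces := by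
    intro i hi
    rw [hfget i hi]
    exact hmem _ (List.get_mem c ⟨i, hi⟩)
  have hfne : ∀ i < n, (f i).Nonempty := by
    intro i hi
    rcases Finset.eq_empty_or_nonempty (f i) with h | h
    · exact absurd (h ▸ hfK i hi) K.empty_notMem
    · exact h
  have hpair := List.isChain_iff_pairwise.mp hchain
  have hlt : ∀ i j, i < j → j < n → f i ⊂ f j := by
    intro i j hij hj
    rw [hfget i (hij.trans hj), hfget j hj]
    exact List.pairwise_iff_get.mp hpair ⟨i, hij.trans hj⟩ ⟨j, hj⟩ hij
  have hmono : ∀ i j, i ≤ j → j < n → f i ⊆ f j := by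
    intro i j hij hj
    rcases eq_or_lt_of_le hij with rfl | h
    · exact subset_rfl
    · exact (hlt i j h hj).subset
  set τ : Finset E := f (n - 1) with hτ'
  have hτK : τ ∈ K.faces := hfK _ (by omega)
  have hfτ : ∀ i < n, f i ⊆ τ := fun i hi => hmono i (n - 1) (by omega) (by omega)
  have indep := K.indep hτK
  set g : ℕ → E := fun i => bary (f i) with hg
  have hS : ∀ k ≤ n, ((c.take k).map bary).toFinset = (Finset.range k).image g := by
    intro k hk
    ext b
    simp only [List.mem_toFinset, List.mem_map, Finset.mem_image, Finset.mem_range]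
    constructor
    · rintro ⟨a, ha, rfl⟩
      obtain ⟨i, hi, rfl⟩ := List.mem_take_iff_getElem.1 ha
      have hik : i < k := (lt_min_iff.1 hi).1
      have hin : i < n := (lt_min_iff.1 hi).2
      exact ⟨i, hik, (congrArg bary (hfget i hin)).symm ▸ rfl⟩
    · rintro ⟨i, hi, rfl⟩
      have hin : i < n := lt_of_lt_of_le hi hk
      refine ⟨c.get ⟨i, hin⟩, List.mem_take_iff_getElem.2 ⟨i, lt_min_iff.2 ⟨hi, hin⟩,
        (List.get_eq_getElem (l := c) (i := ⟨i, hin⟩)).symm⟩, ?_⟩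
      exact (congrArg bary (hfget i hin)).symm
  have hSn : (c.map bary).toFinset = (Finset.range n).image g := by
    have := hS n le_rfl
    rwa [List.take_length] at this
  have hginj : ∀ i ∈ Finset.range n, ∀ j ∈ Finset.range n, g i = g j → i = j := by
    intro i hi j hj hij
    by_contra hne'
    rw [Finset.mem_range] at hi hj
    rcases Nat.lt_or_ge i j with h | h
    · exact (hlt i j h hj).not_subset
        (bary_subset indep (hfτ j hj) (hfτ i hi) (hfne j hj) (hfne i hi) hij.symm)
    · have h' : j < i := lt_of_le_of_ne h (Ne.symm hne')
      exact (hlt j i h' hi).not_subset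
        (bary_subset indep (hfτ i hi) (hfτ j hj) (hfne i hi) (hfne j hj) hij)
  have hext : ∀ x ∈ convexHull ℝ (((c.map bary).toFinset : Finset E) : Set E) ∩
      convexHull ℝ (α : Set E),
      ∃ t : ℕ → ℝ, (∀ i ∈ Finset.range n, 0 ≤ t i) ∧ (∑ i ∈ Finset.range n, t i = 1) ∧
        (∑ i ∈ Finset.range n, t i • g i = x) ∧ ∀ i < n, 0 < t i → f i ⊆ α := by
    rintro x ⟨hx1, hx2⟩
    rw [hSn] at hx1
    obtain ⟨w, hw0, hw1, hwx⟩ := Finset.mem_convexHull'.1 hx1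
    have ht1 : ∑ i ∈ Finset.range n, w (g i) = 1 := by
      rw [Finset.sum_image hginj] at hw1; exact hw1
    have htx : ∑ i ∈ Finset.range n, w (g i) • g i = x := by
      rw [Finset.sum_image hginj] at hwx; exact hwx
    have ht0 : ∀ i ∈ Finset.range n, 0 ≤ w (g i) :=
      fun i hi => hw0 _ (Finset.mem_image_of_mem g hi)
    have hxτ : x ∈ convexHull ℝ (τ : Set E) := by
      refine convexHull_min ?_ (convex_convexHull ℝ _) hx1
      intro b hb
      obtain ⟨i, hi, rfl⟩ := Finset.mem_image.1 (Finset.mem_coe.1 hb)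
      rw [Finset.mem_range] at hi
      exact convexHull_mono (by exact_mod_cast hfτ i hi)
        (Finset.centroid_mem_convexHull (f i) (hfne i hi))
    have hxint : x ∈ convexHull ℝ ((τ ∩ α : Finset E) : Set E) := by
      have := K.inter_subset_convexHull hτK hα ⟨hxτ, hx2⟩
      rwa [← Finset.coe_inter] at this
    have hsupp := key_support indep hfτ hfne ht0 ht1 (s := τ ∩ α) Finset.inter_subset_left
      (by rw [htx]; exact hxint)
    exact ⟨fun i => w (g i), ht0, ht1, htx,
      fun i hi hti => (hsupp i hi hti).trans Finset.inter_subset_right⟩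
  by_cases hc0 : f 0 ⊆ α
  · right
    set P : ℕ → Prop := fun i => f i ⊆ α with hP
    set ℓ := Nat.findGreatest P (n - 1) with hℓ
    have hℓn : ℓ < n := lt_of_le_of_lt (Nat.findGreatest_le _) (by omega)
    have hℓα : f ℓ ⊆ α := Nat.findGreatest_spec (P := P) (Nat.zero_le _) hc0
    have hmax : ∀ i < n, f i ⊆ α → i ≤ ℓ := fun i hi hiα =>
      Nat.le_findGreatest (P := P) (by omega) hiα
    refine ⟨ℓ, hℓn, ?_⟩
    rw [hS (ℓ + 1) (by omega)]
    apply Set.Subset.antisymm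
    · intro x hx
      obtain ⟨t, ht0, ht1, htx, hsupp⟩ := hext x hx
      have hvanish : ∀ i ∈ Finset.range n, i ∉ Finset.range (ℓ + 1) → t i = 0 := by
        intro i hi hi'
        by_contra h
        have hpos : 0 < t i := lt_of_le_of_ne (ht0 i hi) (Ne.symm h)
        have := hmax i (Finset.mem_range.1 hi) (hsupp i (Finset.mem_range.1 hi) hpos)
        exact hi' (Finset.mem_range.2 (by omega))
      have hsub : Finset.range (ℓ + 1) ⊆ Finset.range n := Finset.range_subset_range.2 (by omega)
      have ht1' : ∑ i ∈ Finset.range (ℓ + 1), t i = 1 := by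
        rw [Finset.sum_subset hsub hvanish]; exact ht1
      have htx' : ∑ i ∈ Finset.range (ℓ + 1), t i • g i = x := by
        rw [Finset.sum_subset hsub (fun i hi hi' => by rw [hvanish i hi hi', zero_smul])]
        exact htx
      rw [← htx', ← Finset.centerMass_eq_of_sum_1 _ g ht1']
      exact Finset.centerMass_mem_convexHull _ (fun i hi => ht0 i (hsub hi))
        (by rw [ht1']; norm_num)
        (fun i hi => Finset.mem_coe.2 (Finset.mem_image_of_mem g hi))
    · intro x hx
      constructor
      · rw [hSn]
        refine convexHull_mono ?_ hx
        exact_mod_cast Finset.image_subset_image (Finset.range_subset_range.2 (by omega))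
      · refine convexHull_min ?_ (convex_convexHull ℝ _) hx
        intro b hb
        obtain ⟨i, hi, rfl⟩ := Finset.mem_image.1 (Finset.mem_coe.1 hb)
        rw [Finset.mem_range] at hi
        have hiℓ : i ≤ ℓ := Nat.lt_succ_iff.1 hi
        have hiα : f i ⊆ α := (hmono i ℓ hiℓ hℓn).trans hℓα
        exact convexHull_mono (by exact_mod_cast hiα)
          (Finset.centroid_mem_convexHull (f i) (hfne i (by omega)))
  · left
    rw [Set.eq_empty_iff_forall_notMem]
    intro x hx
    obtain ⟨t, ht0, ht1, htx, hsupp⟩ := hext x hx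
    have hpos : ∃ i ∈ Finset.range n, 0 < t i := by
      by_contra h
      push_neg at h
      have hz : ∑ i ∈ Finset.range n, t i = 0 :=
        Finset.sum_eq_zero fun i hi => le_antisymm (h i hi) (ht0 i hi)
      rw [ht1] at hz
      exact one_ne_zero hz
    obtain ⟨i, hi, hti⟩ := hpos
    exact hc0 ((hmono 0 i (Nat.zero_le _) (Finset.mem_range.1 hi)).trans
      (hsupp i (Finset.mem_range.1 hi) hti))

end
end

section
/- In a full filtered complex K of dimension n, every simplex σ ∈ K has a unique canonical join decomposition σ = σ_0 * σ_1 * ... * σ_n, where for each ℓ ∈ {0,...,n} the intersection σ ∩ |K_ℓ| equals σ_0 * ... * σ_ℓ (with the convention ∅ * E = E). -/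
/-!
Since the vertices of `σ` are affinely independent, a face of `σ` is determined by its convex
hull, and a vertex of `σ` lies in the hull of a face only if it is a vertex of that face.
Fullness therefore forces `σ ∩ |K_ℓ|` to be the face spanned by the vertices of `σ` lying in
`|K_ℓ|`. The canonical factor `σ_ℓ` consists of the vertices that first appear in `|K_ℓ|`; any
decomposition with the prescribed partial joins `σ_0 * ... * σ_ℓ` recovers its factors as
successive differences of these partial joins, which gives uniqueness.
-/


open Finset Set
open scoped Classical
noncomputable section

abbrev Zm := WithBot (WithTop ℤ)

variable {E : Type*} [NormedAddCommGroup E] [NormedSpace ℝ E]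

/-- A filtered simplicial complex: a geometric simplicial complex `K` in `E`
together with a filtration by subcomplexes `K = K_n ⊇ K_{n-1} ⊇ ... ⊇ K_0`. -/
structure FilteredComplex (E : Type*) [NormedAddCommGroup E] [NormedSpace ℝ E] where
  n : ℕ
  K : Geometry.SimplicialComplex ℝ E
  filt : ℕ → Set (Finset E)
  filt_sub : ∀ i, filt i ⊆ K.faces
  filt_mono : Monotone filt
  filt_top : ∀ i, n ≤ i → filt i = K.faces
  filt_down : ∀ i, ∀ s ∈ filt i, ∀ t ∈ K.faces, t ⊆ s → t ∈ filt i

/-- Geometric realization of a set of simplices. -/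
def creal (S : Set (Finset E)) : Set E := ⋃ s ∈ S, convexHull ℝ (s : Set E)

def FilteredComplex.realLt (F : FilteredComplex E) (i : ℕ) : Set E :=
  if i = 0 then ∅ else creal (F.filt (i - 1))

/-- The set `|K_i| \ |K_{i-1}|` whose connected components are the `i`-strata. -/
def FilteredComplex.stratumSet (F : FilteredComplex E) (i : ℕ) : Set E :=
  creal (F.filt i) \ F.realLt i

/-- `S` is an `i`-dimensional stratum of `F`. -/
def FilteredComplex.IsStratum (F : FilteredComplex E) (i : ℕ) (S : Set E) : Prop :=
  i ≤ F.n ∧ ∃ x ∈ F.stratumSet i, S = connectedComponentIn (F.stratumSet i) x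

/-- A filtered complex is full if each simplex meets each `|K_ℓ|` in a face (or not at all). -/
def FilteredComplex.Full (F : FilteredComplex E) : Prop :=
  ∀ σ ∈ F.K.faces, ∀ ℓ : ℕ,
    convexHull ℝ (σ : Set E) ∩ creal (F.filt ℓ) = ∅ ∨
    ∃ t, t ⊆ σ ∧ t.Nonempty ∧
      convexHull ℝ (σ : Set E) ∩ creal (F.filt ℓ) = convexHull ℝ (t : Set E)

/-- `dim (σ ∩ |K_i|) + 1`, computed (in a full complex) as the number of vertices of `σ`
lying in `|K_i|`. -/
def FilteredComplex.nrm (F : FilteredComplex E) (σ : Finset E) (i : ℕ) : ℕ :=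
  (σ.filter (fun v => v ∈ creal (F.filt i))).card

/-- `p̄`-allowability of a simplex `σ` of a (full) filtered complex:
for every singular stratum `S` of dimension `i` meeting `σ`,
`dim (σ ∩ S) ≤ dim σ - codim S + p̄(S)`, written additively in `ℤ ∪ {±∞}`. -/
def FilteredComplex.Allowable (F : FilteredComplex E) (p : Set E → Zm) (σ : Finset E) : Prop :=
  ∀ i : ℕ, i < F.n → ∀ S : Set E, F.IsStratum i S →
    (convexHull ℝ (σ : Set E) ∩ S).Nonempty →
    (F.nrm σ i : Zm) + ((F.n - i : ℕ) : Zm) ≤ (σ.card : Zm) + p S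

end

noncomputable section
open Finset Set
open scoped Classical

variable {E : Type*} [NormedAddCommGroup E] [NormedSpace ℝ E]

/-- `f` is the canonical join decomposition `σ = σ_0 * ... * σ_n` of the simplex `σ`
with respect to the filtration `filt`: the factors are pairwise disjoint, their union is `σ`,
and for each `ℓ`, `σ ∩ |K_ℓ| = σ_0 * ... * σ_ℓ` (with `∅ * E = E`, and the convex hull of the
empty set being empty). -/
def CanonDecomp (n : ℕ) (filt : ℕ → Set (Finset E)) (σ : Finset E)
    (f : Fin (n + 1) → Finset E) : Prop :=
  (∀ i j, i ≠ j → Disjoint (f i) (f j)) ∧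
  σ = (Finset.univ : Finset (Fin (n + 1))).biUnion f ∧
  ∀ ℓ : Fin (n + 1),
    convexHull ℝ (σ : Set E) ∩ creal (filt ℓ) =
      convexHull ℝ ((((Finset.univ.filter (fun i => i ≤ ℓ)).biUnion f : Finset E)) : Set E)

section AffineIndependent

variable {𝕜 V : Type*} [Field 𝕜] [LinearOrder 𝕜] [IsStrictOrderedRing 𝕜] [AddCommGroup V]
  [Module 𝕜 V] {s t t' : Finset V}

theorem AffineIndependent.mem_convexHull_iff (hs : AffineIndependent 𝕜 ((↑) : s → V))
    (ht : t ⊆ s) {v : V} (hv : v ∈ s) : v ∈ convexHull 𝕜 (t : Set V) ↔ v ∈ t := by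
  refine ⟨fun hvt => ?_, fun hvt => subset_convexHull 𝕜 _ hvt⟩
  have hinter : v ∈ convexHull 𝕜 (({v} : Finset V) ∩ t : Set V) := by
    rw [hs.convexHull_inter (singleton_subset_iff.2 hv) ht]
    exact ⟨by simp, hvt⟩
  by_contra hvt
  rwa [← coe_inter, Finset.singleton_inter_of_notMem hvt, coe_empty, convexHull_empty] at hinter

theorem AffineIndependent.eq_of_convexHull_eq (hs : AffineIndependent 𝕜 ((↑) : s → V))
    (ht : t ⊆ s) (ht' : t' ⊆ s) (h : convexHull 𝕜 (t : Set V) = convexHull 𝕜 (t' : Set V)) :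
    t = t' := by
  ext v
  by_cases hv : v ∈ s
  · rw [← hs.mem_convexHull_iff ht hv, ← hs.mem_convexHull_iff ht' hv, h]
  · exact iff_of_false (fun h => hv (ht h)) (fun h => hv (ht' h))

theorem AffineIndependent.convexHull_inter_eq_convexHull_filter
    (hs : AffineIndependent 𝕜 ((↑) : s → V)) {X : Set V} (ht : t ⊆ s)
    (h : convexHull 𝕜 (s : Set V) ∩ X = convexHull 𝕜 (t : Set V)) :
    convexHull 𝕜 (s : Set V) ∩ X = convexHull 𝕜 (s.filter (· ∈ X) : Set V) := by
  suffices t = s.filter (· ∈ X) by rw [h, this]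
  ext v
  refine ⟨fun hv => mem_filter.2 ⟨ht hv, ?_⟩, fun hv => ?_⟩
  · exact (h.symm ▸ subset_convexHull 𝕜 _ hv : v ∈ convexHull 𝕜 (s : Set V) ∩ X).2
  · obtain ⟨hvs, hvX⟩ := mem_filter.1 hv
    rw [← hs.mem_convexHull_iff ht hvs, ← h]
    exact ⟨subset_convexHull 𝕜 _ hvs, hvX⟩

end AffineIndependent

section PrefixUnion

open Function

variable {ι α : Type*} [Fintype ι] [LinearOrder ι]

def prefixUnion (f : ι → Finset α) (ℓ : ι) : Finset α :=
  (univ.filter (· ≤ ℓ)).biUnion f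

theorem eq_prefixUnion_sdiff {f : ι → Finset α}
    (hf : Pairwise (Disjoint on f)) (ℓ : ι) :
    f ℓ = prefixUnion f ℓ \ (univ.filter (· < ℓ)).biUnion (prefixUnion f) := by
  ext v
  simp only [prefixUnion, Finset.mem_sdiff, Finset.mem_biUnion, Finset.mem_filter,
    Finset.mem_univ, true_and, not_exists, not_and]
  refine ⟨fun hv => ⟨⟨ℓ, le_rfl, hv⟩, fun k hkℓ i hik hvi => ?_⟩, ?_⟩
  · exact disjoint_left.1 (hf (hik.trans_lt hkℓ).ne) hvi hv
  · rintro ⟨⟨i, hiℓ, hvi⟩, hnot⟩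
    obtain rfl | hlt := hiℓ.eq_or_lt
    · exact hvi
    · exact absurd hvi (hnot i hlt i le_rfl)

theorem eq_of_prefixUnion_eq {f g : ι → Finset α}
    (hf : Pairwise (Disjoint on f)) (hg : Pairwise (Disjoint on g))
    (h : prefixUnion f = prefixUnion g) : f = g :=
  funext fun ℓ => by rw [eq_prefixUnion_sdiff hf, eq_prefixUnion_sdiff hg, h]

variable (s : Finset α) (X : ι → Set α)

def enteringAt (ℓ : ι) : Finset α :=
  s.filter fun v => v ∈ X ℓ ∧ ∀ k < ℓ, v ∉ X k

theorem pairwise_disjoint_enteringAt : Pairwise (Disjoint on enteringAt s X) :=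
  (pairwise_disjoint_on _).2 fun i _ hij => disjoint_left.2 fun _ hvi hvj =>
    (mem_filter.1 hvj).2.2 i hij (mem_filter.1 hvi).2.1

variable {s X}

theorem prefixUnion_enteringAt (hX : Monotone X) (ℓ : ι) :
    prefixUnion (enteringAt s X) ℓ = s.filter (· ∈ X ℓ) := by
  ext v
  simp only [prefixUnion, enteringAt, Finset.mem_biUnion, Finset.mem_filter, Finset.mem_univ,
    true_and]
  refine ⟨fun ⟨i, hiℓ, hvs, hvi, _⟩ => ⟨hvs, hX hiℓ hvi⟩, fun ⟨hvs, hvℓ⟩ => ?_⟩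
  obtain ⟨k, hvk, hmin⟩ := wellFounded_lt.has_min {k | v ∈ X k} ⟨ℓ, hvℓ⟩
  exact ⟨k, not_lt.1 fun h => hmin ℓ hvℓ h, hvs, hvk, fun j hj hvj => hmin j hvj hj⟩

theorem biUnion_enteringAt (hX : Monotone X) (hs : ∀ v ∈ s, ∃ ℓ, v ∈ X ℓ) :
    univ.biUnion (enteringAt s X) = s := by
  refine Subset.antisymm (biUnion_subset.2 fun ℓ _ => filter_subset _ _) fun v hv => ?_
  obtain ⟨ℓ, hvℓ⟩ := hs v hv
  have : v ∈ prefixUnion (enteringAt s X) ℓ := by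
    rw [prefixUnion_enteringAt hX]
    exact mem_filter.2 ⟨hv, hvℓ⟩
  exact biUnion_subset_biUnion_of_subset_left _ (subset_univ _) this

end PrefixUnion

theorem creal_mono : Monotone (creal : Set (Finset E) → Set E) :=
  fun _ _ h => biUnion_subset_biUnion_left h

theorem subset_creal {S : Set (Finset E)} {s : Finset E} (hs : s ∈ S) :
    (s : Set E) ⊆ creal S :=
  fun _ hv => mem_biUnion hs (subset_convexHull ℝ _ hv)

theorem FilteredComplex.Full.convexHull_inter_creal {F : FilteredComplex E} (hfull : F.Full)
    {σ : Finset E} (hσ : σ ∈ F.K.faces) (ℓ : ℕ) :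
    convexHull ℝ (σ : Set E) ∩ creal (F.filt ℓ) =
      convexHull ℝ (σ.filter (· ∈ creal (F.filt ℓ)) : Set E) := by
  obtain ⟨t, htσ, ht⟩ : ∃ t ⊆ σ,
      convexHull ℝ (σ : Set E) ∩ creal (F.filt ℓ) = convexHull ℝ (t : Set E) := by
    rcases hfull σ hσ ℓ with hempty | ⟨t, htσ, -, ht⟩
    · exact ⟨∅, empty_subset σ, by simpa using hempty⟩
    · exact ⟨t, htσ, ht⟩
  exact (F.K.indep hσ).convexHull_inter_eq_convexHull_filter htσ ht

/-- In a full filtered complex `K` of dimension `n`, every simplex `σ ∈ K`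
has a unique canonical join decomposition `σ = σ_0 * σ_1 * ... * σ_n`, where for each
`ℓ ∈ {0,...,n}` the intersection `σ ∩ |K_ℓ|` equals `σ_0 * ... * σ_ℓ`. -/
theorem canonDecomp_exists_unique (F : FilteredComplex E) (hfull : F.Full)
    (σ : Finset E) (hσ : σ ∈ F.K.faces) :
    ∃! f : Fin (F.n + 1) → Finset E, CanonDecomp F.n F.filt σ f := by
  set X : Fin (F.n + 1) → Set E := fun ℓ => creal (F.filt ℓ)
  have hX : Monotone X := creal_mono.comp (F.filt_mono.comp Fin.val_strictMono.monotone)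
  have hmeet (ℓ : Fin (F.n + 1)) := hfull.convexHull_inter_creal hσ ℓ
  have htop (v : E) (hv : v ∈ σ) : ∃ ℓ, v ∈ X ℓ :=
    ⟨Fin.last F.n, subset_creal (F.filt_top F.n le_rfl ▸ hσ : σ ∈ F.filt F.n) hv⟩
  refine ⟨enteringAt σ X, ⟨pairwise_disjoint_enteringAt σ X, (biUnion_enteringAt hX htop).symm,
    fun ℓ => ?_⟩, fun f hf => ?_⟩
  · rw [hmeet ℓ, ← prefixUnion_enteringAt hX ℓ]
    rfl
  · refine eq_of_prefixUnion_eq hf.1 (pairwise_disjoint_enteringAt σ X) (funext fun ℓ => ?_)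
    rw [prefixUnion_enteringAt hX]
    have hsub : prefixUnion f ℓ ⊆ σ :=
      hf.2.1 ▸ biUnion_subset_biUnion_of_subset_left _ (subset_univ _)
    exact (F.K.indep hσ).eq_of_convexHull_eq hsub (filter_subset _ _) (hf.2.2 ℓ ▸ hmeet ℓ)

end
end

section
/- Let (K, p̄) be a perverse full filtered complex of dimension n with complexity (a,b), let β be a clot of K contained in the singular stratum Q, and let α be a simplex of the link L_β. Then the join β * α is a p̄-allowable simplex of β * L_β if and only if dim α ≥ codim_v(Q) − p̄(Q) − 1 and α is a p̄-allowable simplex of L_β. -/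
open Finset Set
open scoped Classical
noncomputable section
open Finset Set
open scoped Classical

variable {E : Type*} [NormedAddCommGroup E] [NormedSpace ℝ E]

/-- The link of a simplex `β` in the complex of `F`: simplices `α` with `β * α ∈ K`. -/
def lk (F : FilteredComplex E) (β : Finset E) : Set (Finset E) :=
  {α | α ∈ F.K.faces ∧ Disjoint α β ∧ α ∪ β ∈ F.K.faces}

/-- `a` is the first coordinate of the complexity of `F`:
the largest `k ≤ n` with `K_{n-k} ≠ ∅`. -/
def IsMaxIndex (F : FilteredComplex E) (a : ℕ) : Prop :=
  a ≤ F.n ∧ (F.filt (F.n - a)).Nonempty ∧ ∀ k, k ≤ F.n → a < k → F.filt (F.n - k) = ∅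

/-- `β` is a clot: a simplex of `K_{n-a}` of maximal (geometric) dimension `b`. -/
def IsClot (F : FilteredComplex E) (a : ℕ) (β : Finset E) : Prop :=
  β ∈ F.filt (F.n - a) ∧ ∀ σ ∈ F.filt (F.n - a), σ.card ≤ β.card

/- ### Auxiliary lemmas -/

lemma creal_mono_s4 {S T : Set (Finset E)} (h : S ⊆ T) : creal S ⊆ creal T :=
  Set.biUnion_subset_biUnion_left h

lemma creal_empty : creal (∅ : Set (Finset E)) = ∅ := by simp [creal]

lemma mem_creal {S : Set (Finset E)} {s : Finset E} (hs : s ∈ S) {x : E}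
    (hx : x ∈ convexHull ℝ (s : Set E)) : x ∈ creal S :=
  Set.mem_biUnion hs hx

/-- Uniqueness of barycentric coordinates: if `x` has a representation over `t` with a
nonzero weight at `v ∈ t`, and `x ∈ conv u` with `u ⊆ t`, `v ∉ u`, then the weight at `v`
must vanish. -/
lemma weight_eq_zero {t u : Finset E} (hind : AffineIndependent ℝ ((↑) : t → E))
    (hu : u ⊆ t) {w : E → ℝ} (hw1 : ∑ y ∈ t, w y = 1)
    {x : E} (hx : ∑ y ∈ t, w y • y = x) (hmem : x ∈ convexHull ℝ (u : Set E))
    {v : E} (hv : v ∈ t) (hvu : v ∉ u) : w v = 0 := by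
  obtain ⟨w₂, _, hw₂1, hw₂x⟩ := Finset.mem_convexHull'.mp hmem
  have hsum : ∑ y ∈ t, (if y ∈ u then w₂ y else 0) = 1 := by
    rw [Finset.sum_ite_mem, Finset.inter_eq_right.mpr hu, hw₂1]
  have hcomb : ∑ y ∈ t, (if y ∈ u then w₂ y else 0) • y = x := by
    have : ∀ y ∈ t, (if y ∈ u then w₂ y else 0) • y = (if y ∈ u then w₂ y • y else 0) := by
      intro y _; split <;> simp
    rw [Finset.sum_congr rfl this, Finset.sum_ite_mem, Finset.inter_eq_right.mpr hu, hw₂x]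
  have := hind.eq_of_sum_eq_sum_subtype (w₁ := w) (w₂ := fun y => if y ∈ u then w₂ y else 0)
    (by rw [hw1, hsum]) (by rw [hx, hcomb]) v hv
  simpa [hvu] using this

/-- A vertex of a simplex lying in the convex hull of a subfamily of the vertices belongs to
that subfamily. -/
lemma vertex_mem {σ t : Finset E} (hind : AffineIndependent ℝ ((↑) : σ → E))
    (ht : t ⊆ σ) {v : E} (hv : v ∈ σ) (h : v ∈ convexHull ℝ (t : Set E)) : v ∈ t := by
  by_contra hvt
  have h1 : ∑ y ∈ σ, (if y = v then (1:ℝ) else 0) = 1 := by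
    rw [Finset.sum_ite_eq' σ v (fun _ => (1:ℝ))]; simp [hv]
  have h2 : ∑ y ∈ σ, (if y = v then (1:ℝ) else 0) • y = v := by
    have : ∀ y ∈ σ, (if y = v then (1:ℝ) else 0) • y = (if y = v then y else 0) := by
      intro y _; split <;> simp
    rw [Finset.sum_congr rfl this, Finset.sum_ite_eq' σ v (fun y => y)]; simp [hv]
  have := weight_eq_zero hind ht h1 h2 h hv hvt
  simp at this

/-- If the centroid of an (affinely independent) simplex lies in the hull of a subfamily of its
vertices, the subfamily is everything. -/
lemma subset_of_centroid_mem {t u : Finset E} (hind : AffineIndependent ℝ ((↑) : t → E))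
    (htne : t.Nonempty) (hu : u ⊆ t) (h : t.centroid ℝ id ∈ convexHull ℝ (u : Set E)) :
    t ⊆ u := by
  intro v hv
  by_contra hvu
  have hcard : (t.card : ℝ) ≠ 0 := Nat.cast_ne_zero.mpr (Finset.card_ne_zero_of_mem hv)
  have h1 : ∑ _y ∈ t, (t.card : ℝ)⁻¹ = 1 := by
    rw [Finset.sum_const, nsmul_eq_mul, mul_inv_cancel₀ hcard]
  have h2 : ∑ y ∈ t, (t.card : ℝ)⁻¹ • y = t.centroid ℝ id := by
    rw [Finset.centroid_eq_centerMass _ htne, Finset.centerMass_eq_of_sum_1]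
    · simp [Finset.centroidWeights_apply]
    · exact t.sum_centroidWeights_eq_one_of_nonempty ℝ htne
  have := weight_eq_zero hind hu h1 h2 h hv hvu
  exact (inv_ne_zero hcard) this

/-- The segment from a point of `conv t \ conv u` to a vertex `v ∈ t \ u` stays inside
`conv t \ conv u`. -/
lemma segment_avoid {t u : Finset E} (hind : AffineIndependent ℝ ((↑) : t → E))
    (hu : u ⊆ t) {x : E} (hx : x ∈ convexHull ℝ (t : Set E))
    (hxu : x ∉ convexHull ℝ (u : Set E)) {v : E} (hv : v ∈ t) (hvu : v ∉ u) :
    segment ℝ x v ⊆ convexHull ℝ (t : Set E) \ convexHull ℝ (u : Set E) := by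
  rintro z ⟨pc, q, hp, hq, hpq, rfl⟩
  refine ⟨(convex_convexHull ℝ _) hx (subset_convexHull ℝ _ (Finset.mem_coe.mpr hv)) hp hq hpq, ?_⟩
  intro hz
  obtain ⟨w, hw0, hw1, hwx⟩ := Finset.mem_convexHull'.mp hx
  have h1 : ∑ y ∈ t, (pc * w y + if y = v then q else 0) = 1 := by
    rw [Finset.sum_add_distrib, ← Finset.mul_sum, hw1, mul_one,
      Finset.sum_ite_eq' t v (fun _ => q), if_pos hv, hpq]
  have h2 : ∑ y ∈ t, (pc * w y + if y = v then q else 0) • y = pc • x + q • v := by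
    rw [Finset.sum_congr rfl (g := fun y => pc • (w y • y) + (if y = v then q • y else 0))
      (by intro y _; rw [add_smul, mul_smul, ite_smul, zero_smul]),
      Finset.sum_add_distrib, ← Finset.smul_sum, hwx,
      Finset.sum_ite_eq' t v (fun y => q • y), if_pos hv]
  have h0 := weight_eq_zero hind hu h1 h2 hz hv hvu
  simp at h0
  have hwv := hw0 v hv
  have hq0 : q = 0 := by nlinarith [mul_nonneg hp hwv]
  have hp1 : pc = 1 := by linarith
  apply hxu
  simpa [hq0, hp1] using hz

/-- Cancellation of a finite natural number in `Zm = ℤ ∪ {±∞}`. -/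
lemma zm_cancel (c : ℕ) {x y : Zm} : (c : Zm) + x ≤ (c : Zm) + y ↔ x ≤ y := by
  rw [← WithBot.coe_natCast]
  induction x using WithBot.recBotCoe with
  | bot => simp
  | coe x =>
    induction y using WithBot.recBotCoe with
    | bot =>
      simp only [WithBot.add_bot, ← WithBot.coe_add, le_bot_iff]
      simp
    | coe y =>
      rw [← WithBot.coe_add, ← WithBot.coe_add, WithBot.coe_le_coe, WithBot.coe_le_coe,
        WithTop.add_le_add_iff_left (WithTop.natCast_ne_top c)]

/-- Let `(K, p̄)` be a perverse full filtered complex with complexity `(a,b)`,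
let `β` be a clot of `K` contained in the singular stratum `Q`, and let `α` be a simplex of the
link `L_β`.  Then the join `β * α` is a `p̄`-allowable simplex if and only if
`dim α ≥ codim_v Q − p̄(Q) − 1` and `α` is a `p̄`-allowable simplex.
(The inequality `dim α ≥ codim_v Q − p̄(Q) − 1` is written additively as
`(dim α + 1) + p̄(Q) ≥ codim_v Q`, i.e. `card α + p̄(Q) ≥ a`, valid in `ℤ ∪ {±∞}`.) -/
theorem allowable_join_clot (F : FilteredComplex E) (hfull : F.Full)
    (p : Set E → Zm) (hreg : ∀ S, F.IsStratum F.n S → p S = 0)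
    (a : ℕ) (ha : IsMaxIndex F a) (hsing : 0 < a)
    (β : Finset E) (hβ : IsClot F a β)
    (Q : Set E) (hQ : F.IsStratum (F.n - a) Q) (hβQ : bary β ∈ Q)
    (α : Finset E) (hα : α ∈ lk F β) :
    F.Allowable p (β ∪ α) ↔
      (((a : ℕ) : Zm) ≤ (α.card : Zm) + p Q ∧ F.Allowable p α) := by
  classical
  obtain ⟨hαK, hdisj, hunion⟩ := hα
  have hσ : β ∪ α ∈ F.K.faces := by rwa [Finset.union_comm]
  have hβK : β ∈ F.K.faces := F.filt_sub _ hβ.1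
  have hβne : β.Nonempty :=
    Finset.nonempty_iff_ne_empty.mpr (fun h => F.K.empty_notMem (h ▸ hβK))
  have haN : a ≤ F.n := ha.1
  have hna : F.n - a < F.n := by omega
  have hindσ : AffineIndependent ℝ ((↑) : (β ∪ α : Finset E) → E) := F.K.indep hσ
  -- the filtration is empty below level `n - a`
  have hlow : ∀ i, i < F.n - a → F.filt i = ∅ := by
    intro i hi
    have h1 : F.n - (F.n - i) = i := by omega
    have := ha.2.2 (F.n - i) (by omega) (by omega)
    rwa [h1] at this
  have hnostrat : ∀ i, i < F.n - a → ∀ S : Set E, ¬ F.IsStratum i S := by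
    rintro i hi S ⟨-, x, hx, -⟩
    have hx1 := hx.1
    rw [hlow i hi, creal_empty] at hx1
    exact hx1
  have hrealna : F.realLt (F.n - a) = ∅ := by
    unfold FilteredComplex.realLt
    split
    · rfl
    · rename_i h
      have h2 : F.n - a - 1 = F.n - (a + 1) := by omega
      rw [h2, ha.2.2 (a + 1) (by omega) (by omega), creal_empty]
  have hreal_sub : ∀ i, F.realLt i ⊆ creal (F.filt i) := by
    intro i
    unfold FilteredComplex.realLt
    split
    · exact Set.empty_subset _
    · exact creal_mono_s4 (F.filt_mono (Nat.sub_le i 1))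
  have hβcre : ∀ i, F.n - a ≤ i → ∀ v ∈ β, v ∈ creal (F.filt i) := by
    intro i hi v hv
    have hvK : {v} ∈ F.K.faces :=
      F.K.down_closed hβK (Finset.singleton_subset_iff.mpr hv) (Finset.singleton_nonempty v)
    have hvf : {v} ∈ F.filt (F.n - a) :=
      F.filt_down _ _ hβ.1 _ hvK (Finset.singleton_subset_iff.mpr hv)
    exact mem_creal (F.filt_mono hi hvf) (subset_convexHull ℝ _ (by simp))
  have hcard : (β ∪ α).card = β.card + α.card :=
    Finset.card_union_of_disjoint hdisj.symm
  have hnrmu : ∀ i, F.n - a ≤ i → F.nrm (β ∪ α) i = β.card + F.nrm α i := by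
    intro i hi
    unfold FilteredComplex.nrm
    rw [Finset.filter_union, Finset.filter_true_of_mem (fun v hv => hβcre i hi v hv),
      Finset.card_union_of_disjoint (hdisj.symm.mono_right (Finset.filter_subset _ _))]
  have hstratna : F.stratumSet (F.n - a) = creal (F.filt (F.n - a)) := by
    unfold FilteredComplex.stratumSet
    rw [hrealna, Set.diff_empty]
  have hQcc : Q = connectedComponentIn (F.stratumSet (F.n - a)) (bary β) := by
    obtain ⟨-, x₁, hx₁, rfl⟩ := hQ
    exact connectedComponentIn_eq hβQ
  have hbb : bary β ∈ convexHull ℝ (β : Set E) := Finset.centroid_mem_convexHull β hβne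
  have hβQ' : convexHull ℝ (β : Set E) ⊆ Q := by
    rw [hQcc]
    exact (convex_convexHull ℝ _).isPreconnected.subset_connectedComponentIn hbb
      (by rw [hstratna]; exact fun x hx => mem_creal hβ.1 hx)
  -- no vertex of `α` lies in `|K_{n-a}|`, by maximality of the clot
  have hnrmα : F.nrm α (F.n - a) = 0 := by
    rw [FilteredComplex.nrm, Finset.card_eq_zero, Finset.filter_eq_empty_iff]
    intro w hw hwc
    have hwσ : w ∈ β ∪ α := Finset.mem_union_right _ hw
    rcases hfull _ hσ (F.n - a) with hemp | ⟨t, htσ, htne, hteq⟩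
    · have : w ∈ (∅ : Set E) := by
        rw [← hemp]
        exact ⟨subset_convexHull ℝ _ (Finset.mem_coe.mpr hwσ), hwc⟩
      exact this
    · have hβt : β ⊆ t := by
        intro v hv
        apply vertex_mem hindσ htσ (Finset.mem_union_left _ hv)
        rw [← hteq]
        exact ⟨subset_convexHull ℝ _ (Finset.mem_coe.mpr (Finset.mem_union_left _ hv)),
          hβcre _ le_rfl v hv⟩
      have hwt : w ∈ t := by
        apply vertex_mem hindσ htσ hwσ
        rw [← hteq]
        exact ⟨subset_convexHull ℝ _ (Finset.mem_coe.mpr hwσ), hwc⟩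
      have htK : t ∈ F.K.faces := F.K.down_closed hσ htσ htne
      have hbt : bary t ∈ creal (F.filt (F.n - a)) := by
        have h1 : bary t ∈ convexHull ℝ (t : Set E) := Finset.centroid_mem_convexHull t htne
        have h2 : bary t ∈ convexHull ℝ (((β ∪ α : Finset E)) : Set E) ∩ creal (F.filt (F.n - a)) := by
          rw [hteq]; exact h1
        exact h2.2
      obtain ⟨s, hsf, hbs⟩ : ∃ s ∈ F.filt (F.n - a), bary t ∈ convexHull ℝ (s : Set E) := by
        simpa [creal] using hbt
      have hts : t ⊆ s := by
        have h1 : bary t ∈ convexHull ℝ ((t ∩ s : Finset E) : Set E) := by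
          rw [Finset.coe_inter]
          exact F.K.inter_subset_convexHull htK (F.filt_sub _ hsf)
            ⟨Finset.centroid_mem_convexHull t htne, hbs⟩
        have h2 := subset_of_centroid_mem (F.K.indep htK) htne Finset.inter_subset_left h1
        exact fun y hy => (Finset.mem_inter.mp (h2 hy)).2
      have htf : t ∈ F.filt (F.n - a) := F.filt_down _ _ hsf _ htK hts
      have hlt : β.card < t.card := by
        apply Finset.card_lt_card
        rw [Finset.ssubset_def]
        exact ⟨hβt, fun h => Finset.disjoint_left.mp hdisj hw (h hwt)⟩
      exact absurd (hβ.2 t htf) (not_le.mpr hlt)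
  -- the dichotomy for strata meeting the join
  have dich : ∀ i, F.n - a ≤ i → ∀ S : Set E, F.IsStratum i S →
      (convexHull ℝ (((β ∪ α : Finset E)) : Set E) ∩ S).Nonempty →
      (convexHull ℝ (α : Set E) ∩ S).Nonempty ∨ (i = F.n - a ∧ S = Q) := by
    intro i hi S hS hne
    obtain ⟨x, hxσ, hxS⟩ := hne
    obtain ⟨hiN, x₀, hx₀, rfl⟩ := hS
    have hxst : x ∈ F.stratumSet i := connectedComponentIn_subset _ _ hxS
    rcases hfull _ hσ i with hemp | ⟨t, htσ, htne, hteq⟩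
    · exfalso
      have : x ∈ (∅ : Set E) := by
        rw [← hemp]; exact ⟨hxσ, hxst.1⟩
      exact this
    obtain ⟨t', ht'σ, ht'eq⟩ : ∃ t', t' ⊆ β ∪ α ∧
        convexHull ℝ (((β ∪ α : Finset E)) : Set E) ∩ F.realLt i
          = convexHull ℝ ((t' : Finset E) : Set E) := by
      by_cases h0 : i = 0
      · exact ⟨∅, Finset.empty_subset _, by simp [FilteredComplex.realLt, h0]⟩
      · unfold FilteredComplex.realLt
        rw [if_neg h0]
        rcases hfull _ hσ (i - 1) with hemp' | ⟨t'', ht''σ, -, ht''eq⟩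
        · exact ⟨∅, Finset.empty_subset _, by rw [hemp']; simp⟩
        · exact ⟨t'', ht''σ, ht''eq⟩
    have ht't : t' ⊆ t := by
      intro u hu
      apply vertex_mem hindσ htσ (ht'σ hu)
      rw [← hteq]
      have hu' : u ∈ convexHull ℝ (t' : Set E) := subset_convexHull ℝ _ (Finset.mem_coe.mpr hu)
      rw [← ht'eq] at hu'
      exact ⟨hu'.1, hreal_sub i hu'.2⟩
    have hxt : x ∈ convexHull ℝ (t : Set E) := by
      rw [← hteq]; exact ⟨hxσ, hxst.1⟩
    have hxt' : x ∉ convexHull ℝ (t' : Set E) := by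
      rw [← ht'eq]; exact fun h => hxst.2 h.2
    have hindt : AffineIndependent ℝ ((↑) : t → E) :=
      F.K.indep (F.K.down_closed hσ htσ htne)
    have hsub : ∀ v ∈ t, v ∉ t' → segment ℝ x v ⊆ F.stratumSet i := by
      intro v hv hv' z hz
      obtain ⟨hz1, hz2⟩ := segment_avoid hindt ht't hxt hxt' hv hv' hz
      have hzσ : z ∈ convexHull ℝ (((β ∪ α : Finset E)) : Set E) ∩ creal (F.filt i) := by
        rw [hteq]; exact hz1
      refine ⟨hzσ.2, fun hzr => hz2 ?_⟩
      rw [← ht'eq]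
      exact ⟨hzσ.1, hzr⟩
    have hvS : ∀ v ∈ t, v ∉ t' → v ∈ connectedComponentIn (F.stratumSet i) x₀ := by
      intro v hv hv'
      rw [connectedComponentIn_eq hxS]
      exact (convex_segment x v).isPreconnected.subset_connectedComponentIn
        (left_mem_segment ℝ x v) (hsub v hv hv') (right_mem_segment ℝ x v)
    by_cases hαv : ∃ v ∈ t, v ∉ t' ∧ v ∈ α
    · obtain ⟨v, hv, hv', hvα⟩ := hαv
      exact Or.inl ⟨v, subset_convexHull ℝ _ (Finset.mem_coe.mpr hvα), hvS v hv hv'⟩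
    · push_neg at hαv
      obtain ⟨v, hv, hv'⟩ : ∃ v ∈ t, v ∉ t' := by
        by_contra h
        push_neg at h
        exact hxt' (convexHull_mono (Finset.coe_subset.mpr h) hxt)
      have hvβ : v ∈ β := by
        rcases Finset.mem_union.mp (htσ hv) with h | h
        · exact h
        · exact absurd h (hαv v hv hv')
      have hvS' := hvS v hv hv'
      have hvst : v ∈ F.stratumSet i := connectedComponentIn_subset _ _ hvS'
      have hieq : i = F.n - a := by
        by_contra hne'
        apply hvst.2
        unfold FilteredComplex.realLt
        rw [if_neg (by omega)]
        exact creal_mono_s4 (F.filt_mono (by omega)) (hβcre _ le_rfl v hvβ)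
      subst hieq
      refine Or.inr ⟨rfl, ?_⟩
      have h1 : connectedComponentIn (F.stratumSet (F.n - a)) x₀
          = connectedComponentIn (F.stratumSet (F.n - a)) v := connectedComponentIn_eq hvS'
      have h2 : Q = connectedComponentIn (F.stratumSet (F.n - a)) v := by
        rw [hQcc]
        exact connectedComponentIn_eq
          (hQcc ▸ hβQ' (subset_convexHull ℝ _ (Finset.mem_coe.mpr hvβ)))
      rw [h1, ← h2]
  -- the main equivalence
  constructor
  · intro hall
    constructor
    · have hne : (convexHull ℝ (((β ∪ α : Finset E)) : Set E) ∩ Q).Nonempty :=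
        ⟨bary β, convexHull_mono (by rw [Finset.coe_union]; exact Set.subset_union_left) hbb, hβQ⟩
      have h := hall (F.n - a) hna Q hQ hne
      rw [hnrmu _ le_rfl, hnrmα, hcard, Nat.sub_sub_self haN] at h
      push_cast at h
      rw [add_zero, add_assoc] at h
      exact (zm_cancel β.card).mp h
    · intro i hi S hS hneα
      have hge : F.n - a ≤ i := by
        by_contra h
        exact hnostrat i (by omega) S hS
      have hne : (convexHull ℝ (((β ∪ α : Finset E)) : Set E) ∩ S).Nonempty := by
        obtain ⟨x, hx1, hx2⟩ := hneα
        exact ⟨x, convexHull_mono (by rw [Finset.coe_union]; exact Set.subset_union_right) hx1, hx2⟩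
      have h := hall i hi S hS hne
      rw [hnrmu _ hge, hcard] at h
      push_cast at h
      rw [add_assoc, add_assoc] at h
      exact (zm_cancel β.card).mp h
  · rintro ⟨h1, h2⟩ i hi S hS hne
    have hge : F.n - a ≤ i := by
      by_contra h
      exact hnostrat i (by omega) S hS
    rcases dich i hge S hS hne with hmeet | ⟨hieq, rfl⟩
    · have h := h2 i hi S hS hmeet
      rw [hnrmu _ hge, hcard]
      push_cast
      rw [add_assoc, add_assoc]
      exact add_le_add_right h _
    · subst hieq
      rw [hnrmu _ le_rfl, hnrmα, hcard, Nat.sub_sub_self haN]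
      push_cast
      rw [add_zero, add_assoc]
      exact add_le_add_right h1 _

end
end

section
/- Let (F,ε) = (F_0,ε_0) × ... × (F_n,ε_n) be a face of the blow-up Δ̃ = cΔ_0 × ... × cΔ_{n−1} × Δ_n of a regular filtered simplex, with F_0 = ... = F_{m−1} = ∅ (so ε_0 = ... = ε_{m−1} = 1) for some m ∈ {0,...,n−1}. Then for every ℓ ∈ {1,...,n}, the perverse degree ||1_{(F,ε)}||_ℓ does not depend on the face F_m: replacing F_m by any other face F'_m of Δ_m (keeping ε_m and all other factors fixed) yields a cochain with the same ℓ-perverse degrees for all ℓ. -/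
noncomputable section
open Finset

variable {ι : Type*} [LinearOrder ι]

/-- The `ℓ`-perverse degree of the basis cochain `1_{(F,ε)}` on the blow-up
`Δ̃ = cΔ_0 × ... × cΔ_{n-1} × Δ_n` of a regular filtered simplex `Δ = Δ_0 * ... * Δ_n`:
it is `-∞` if `ε_{n-ℓ} = 1` and `|(F,ε)|_{> n-ℓ} = Σ_{j > n-ℓ} dim (F_j, ε_j)` otherwise,
where `dim (F_j, ε_j) = card F_j - 1 + ε_j`. -/
def pdeg (n : ℕ) (F : ℕ → Finset ι) (ε : ℕ → Bool) (ℓ : ℕ) : WithBot ℤ :=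
  if ε (n - ℓ) then ⊥
  else ((∑ j ∈ (Finset.range (n + 1)).filter (fun j => n - ℓ < j),
      (((F j).card : ℤ) + (if ε j then 1 else 0) - 1) : ℤ) : WithBot ℤ)

/-- A face `(F,ε)` of the blow-up of the regular filtered simplex `Δ = Δ_0 * ... * Δ_n`
(`Δ_n ≠ ∅`): each `F_i` is a face of `Δ_i` or empty with `ε_i = 1`, and `ε_n = 0` with
`F_n ≠ ∅`. -/
def IsBlowupFace (n : ℕ) (Δ : ℕ → Finset ι) (F : ℕ → Finset ι) (ε : ℕ → Bool) : Prop :=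
  (∀ i ≤ n, F i ⊆ Δ i) ∧ ε n = false ∧ (F n).Nonempty ∧ ∀ i < n, F i = ∅ → ε i = true

section

omit [LinearOrder ι]

theorem pdeg_eq_bot (n : ℕ) (F : ℕ → Finset ι) {ε : ℕ → Bool} {ℓ : ℕ}
    (hε : ε (n - ℓ) = true) : pdeg n F ε ℓ = ⊥ := by
  simp [pdeg, hε]

theorem pdeg_congr {n : ℕ} {F F' : ℕ → Finset ι} {ε : ℕ → Bool} {ℓ : ℕ}
    (h : ∀ j, n - ℓ < j → F j = F' j) : pdeg n F ε ℓ = pdeg n F' ε ℓ := by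
  unfold pdeg
  congr 2
  exact Finset.sum_congr rfl fun j hj => by rw [h j (Finset.mem_filter.mp hj).2]

theorem IsBlowupFace.le_of_eps_eq_false {n m i : ℕ} {Δ F : ℕ → Finset ι} {ε : ℕ → Bool}
    (hface : IsBlowupFace n Δ F ε) (hzero : ∀ j < m, F j = ∅) (hi : i < n)
    (hε : ε i = false) : m ≤ i := by
  by_contra! him
  simp [hface.2.2.2 i hi (hzero i him)] at hε

end

theorem pdeg_not_depend_on_first_factor_general (n : ℕ) (Δ : ℕ → Finset ι)
    (F F' : ℕ → Finset ι) (ε : ℕ → Bool)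
    (hface : IsBlowupFace n Δ F ε)
    (m : ℕ) (hzero : ∀ i < m, F i = ∅)
    (hagree : ∀ j, j ≠ m → F' j = F j) :
    ∀ ℓ, 1 ≤ ℓ → ℓ ≤ n → pdeg n F ε ℓ = pdeg n F' ε ℓ := by
  intro ℓ hℓ hℓn
  cases hε : ε (n - ℓ)
  · have hm : m ≤ n - ℓ := hface.le_of_eps_eq_false hzero (by omega) hε
    exact pdeg_congr fun j hj => (hagree j (by omega)).symm
  · rw [pdeg_eq_bot n F hε, pdeg_eq_bot n F' hε]

/-- Let `(F,ε)` be a face of the blow-up of a regular filtered simplex with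
`F_0 = ... = F_{m-1} = ∅` for some `m ∈ {0,...,n-1}`.  Then for every `ℓ ∈ {1,...,n}` the
perverse degree `‖1_{(F,ε)}‖_ℓ` does not depend on the face `F_m`: replacing `F_m` by any other
face `F'_m` of `Δ_m` (keeping `ε_m` and all the other factors fixed) yields a cochain with the
same `ℓ`-perverse degrees for all `ℓ`. -/
theorem pdeg_not_depend_on_first_factor (n : ℕ) (Δ : ℕ → Finset ι)
    (F F' : ℕ → Finset ι) (ε : ℕ → Bool)
    (hface : IsBlowupFace n Δ F ε) (hface' : IsBlowupFace n Δ F' ε)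
    (m : ℕ) (hm : m < n) (hzero : ∀ i < m, F i = ∅)
    (hagree : ∀ j, j ≠ m → F' j = F j) :
    ∀ ℓ, 1 ≤ ℓ → ℓ ≤ n → pdeg n F ε ℓ = pdeg n F' ε ℓ :=
  pdeg_not_depend_on_first_factor_general n Δ F F' ε hface m hzero hagree

end
end
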